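/- arXiv:1511.01969 — 2 statements merged into one kernel-verified Lean document; each statement's English description precedes it below -/
import Mathlib

section
/- Conversely, if there exists x* ∈ S and q* ∈ ℝ such that R(x) - q*·P(x) ≤ 0 for all x ∈ S and R(x*) - q*·P(x*) = 0, then x* maximizes R(x)/P(x) over S and the maximum value is q*. -/
/-- Converse Dinkelbach: if `R x - q* P x ≤ 0` on `S` with equality at `x* ∈ S`,
then `x*` maximizes `R/P` over `S` with maximum value `q*`. -/
theorem dinkelbach_converse {X : Type*} (S : Set X) (R P : X → ℝ) (qstar : ℝ)
    (hP : ∀ x ∈ S, 0 < P x) (xstar : X) (hx : xstar ∈ S)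
    (hle : ∀ x ∈ S, R x - qstar * P x ≤ 0)
    (heq : R xstar - qstar * P xstar = 0) :
    (∀ x ∈ S, R x / P x ≤ R xstar / P xstar) ∧ R xstar / P xstar = qstar := by
  have hval : R xstar / P xstar = qstar :=
    (div_eq_iff (hP xstar hx).ne').2 (by linarith)
  refine ⟨fun x hxS => ?_, hval⟩
  rw [hval, div_le_iff₀ (hP x hxS)]
  linarith [hle x hxS]
end

section
/- F(q*) = 0 if and only if q* = sup_{x∈S} R(x)/P(x), assuming the suprema are attained. -/
/-! Since `P > 0`, the sign of `R x - q * P x` is the sign of `R x / P x - q`. Hence `F q ≤ 0` says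
that `q` bounds every ratio `R / P` on `S`, and `F q ≥ 0` says that some ratio reaches `q`; both
together say that `q` is the maximum ratio. -/

section Dinkelbach

variable {X : Type*} {S : Set X} {R P : X → ℝ} {q v : ℝ}

lemma sub_mul_nonpos_iff_div_le {r p : ℝ} (hp : 0 < p) : r - q * p ≤ 0 ↔ r / p ≤ q := by
  rw [sub_nonpos, div_le_iff₀ hp]

lemma sub_mul_nonneg_iff_le_div {r p : ℝ} (hp : 0 < p) : 0 ≤ r - q * p ↔ q ≤ r / p := by
  rw [sub_nonneg, le_div_iff₀ hp]

lemma dinkelbach_nonpos_iff (hP : ∀ x ∈ S, 0 < P x)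
    (hv : IsGreatest ((fun x => R x - q * P x) '' S) v) :
    v ≤ 0 ↔ q ∈ upperBounds ((fun x => R x / P x) '' S) := by
  obtain ⟨⟨x, hxS, rfl⟩, hub⟩ := hv
  refine ⟨?_, fun hq => (sub_mul_nonpos_iff_div_le (hP x hxS)).2 (hq ⟨x, hxS, rfl⟩)⟩
  rintro hv _ ⟨y, hyS, rfl⟩
  exact (sub_mul_nonpos_iff_div_le (hP y hyS)).1 ((hub ⟨y, hyS, rfl⟩).trans hv)

lemma dinkelbach_nonneg_iff (hP : ∀ x ∈ S, 0 < P x)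
    (hv : IsGreatest ((fun x => R x - q * P x) '' S) v) :
    0 ≤ v ↔ ∃ x ∈ S, q ≤ R x / P x := by
  obtain ⟨⟨x, hxS, rfl⟩, hub⟩ := hv
  refine ⟨fun hv => ⟨x, hxS, (sub_mul_nonneg_iff_le_div (hP x hxS)).1 hv⟩, ?_⟩
  rintro ⟨y, hyS, hy⟩
  exact ((sub_mul_nonneg_iff_le_div (hP y hyS)).2 hy).trans (hub ⟨y, hyS, rfl⟩)

lemma dinkelbach_eq_zero_iff (hP : ∀ x ∈ S, 0 < P x)
    (hv : IsGreatest ((fun x => R x - q * P x) '' S) v) :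
    v = 0 ↔ IsGreatest ((fun x => R x / P x) '' S) q := by
  rw [le_antisymm_iff, dinkelbach_nonpos_iff hP hv, dinkelbach_nonneg_iff hP hv]
  constructor
  · rintro ⟨hub, x, hxS, hx⟩
    have hq : R x / P x = q := le_antisymm (hub ⟨x, hxS, rfl⟩) hx
    exact ⟨⟨x, hxS, hq⟩, hub⟩
  · rintro ⟨⟨x, hxS, hx⟩, hub⟩
    exact ⟨hub, x, hxS, hx.ge⟩

end Dinkelbach

/-- `F q* = 0` iff `q*` is the maximum of `R/P` over `S`, assuming both
the Dinkelbach max and the max of `R/P` are attained. -/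
theorem dinkelbach_root_iff {X : Type*} (S : Set X) (R P : X → ℝ)
    (hP : ∀ x ∈ S, 0 < P x) (F : ℝ → ℝ)
    (hF : ∀ q, ∃ x ∈ S, F q = R x - q * P x ∧ ∀ y ∈ S, R y - q * P y ≤ F q)
    (x0 : X) (hx0 : x0 ∈ S) (hmax : ∀ x ∈ S, R x / P x ≤ R x0 / P x0)
    (qstar : ℝ) :
    F qstar = 0 ↔ qstar = R x0 / P x0 := by
  have hFq : IsGreatest ((fun x => R x - qstar * P x) '' S) (F qstar) := by
    obtain ⟨x, hxS, hFx, hub⟩ := hF qstar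
    exact ⟨⟨x, hxS, hFx.symm⟩, by rintro _ ⟨y, hyS, rfl⟩; exact hub y hyS⟩
  have hx0max : IsGreatest ((fun x => R x / P x) '' S) (R x0 / P x0) :=
    ⟨⟨x0, hx0, rfl⟩, by rintro _ ⟨x, hxS, rfl⟩; exact hmax x hxS⟩
  rw [dinkelbach_eq_zero_iff hP hFq]
  exact ⟨fun hq => hq.unique hx0max, fun hq => hq ▸ hx0max⟩
end
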